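/- arXiv:2209.04690 — 2 statements merged into one kernel-verified Lean document; each statement's English description precedes it below -/
import Mathlib

section
/- Let m ≤ n, let g : ℝⁿ → ℝᵐ be C² and let x ∈ ℝⁿ be such that the Jacobian Jg(x) has full rank m. On the open set where Jg has full rank define the matrix-valued map Π_g(y) = Iₙ − Jg(y)ᵀ (Jg(y) Jg(y)ᵀ)⁻¹ Jg(y) (the orthogonal projection onto Ker(Jg(y))). Then for every v ∈ Ker(Jg(x)), the directional derivative of Π_g at x in the direction v, applied to the vector v, equals −Jg(x)ᵀ (Jg(x) Jg(x)ᵀ)⁻¹ q(v), where q(v) ∈ ℝᵐ is the vector with components vᵀ ∇²gᵢ(x) v, i = 1,…,m. -/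
open Matrix Set Metric

noncomputable def grad {n : ℕ} (f : (Fin n → ℝ) → ℝ) (x : Fin n → ℝ) : Fin n → ℝ :=
  fun i => fderiv ℝ f x (Pi.single i 1)

noncomputable def hess {n : ℕ} (f : (Fin n → ℝ) → ℝ) (x : Fin n → ℝ) :
    Matrix (Fin n) (Fin n) ℝ :=
  Matrix.of fun i j => fderiv ℝ (fun y => fderiv ℝ f y (Pi.single j 1)) x (Pi.single i 1)

noncomputable def jac {n m : ℕ} (g : (Fin n → ℝ) → Fin m → ℝ) (x : Fin n → ℝ) :
    Matrix (Fin m) (Fin n) ℝ :=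
  Matrix.of fun i j => fderiv ℝ (fun y => g y i) x (Pi.single j 1)

noncomputable def euclNorm {n : ℕ} (v : Fin n → ℝ) : ℝ := Real.sqrt (v ⬝ᵥ v)

/-! Near `x` the full-rank condition is open, being `det (Jg Jgᵀ) ≠ 0`, so there
`Π_g = I - Q Jg` with `Q = Jgᵀ (Jg Jgᵀ)⁻¹`, which is differentiable by Cramer's rule.
For the fixed vector `v` we have `Π_g(y) v = v - Q(y) (Jg(y) v)`, and the factor `Jg(y) v`
vanishes at `y = x`. The product rule therefore leaves only `-Q(x)` applied to the derivative
of `y ↦ Jg(y) v` in direction `v`, which is the vector of Hessian forms `vᵀ ∇²gᵢ(x) v`. -/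

theorem Matrix.det_ne_zero_of_rank_eq_card {ι K : Type*} [Fintype ι] [DecidableEq ι] [Field K]
    {M : Matrix ι ι K} (h : M.rank = Fintype.card ι) : M.det ≠ 0 := by
  have hsurj : Function.Surjective M.mulVecLin := LinearMap.range_eq_top.1 <|
    Submodule.eq_top_of_finrank_eq (by rwa [Module.finrank_fintype_fun_eq_card])
  exact ((Matrix.isUnit_iff_isUnit_det M).1 (Matrix.mulVec_surjective_iff_isUnit.1 hsurj)).ne_zero

theorem Matrix.rank_eq_card_iff_det_mul_transpose_ne_zero {ι κ K : Type*} [Fintype ι]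
    [DecidableEq ι] [Fintype κ] [Field K] [LinearOrder K] [IsStrictOrderedRing K]
    (A : Matrix ι κ K) : A.rank = Fintype.card ι ↔ (A * Aᵀ).det ≠ 0 := by
  rw [← Matrix.rank_self_mul_transpose]
  exact ⟨Matrix.det_ne_zero_of_rank_eq_card, Matrix.rank_of_det_ne_zero⟩

theorem Matrix.eventually_rank_eq_card {X ι κ K : Type*} [TopologicalSpace X] [Fintype ι]
    [DecidableEq ι] [Fintype κ] [Field K] [LinearOrder K] [IsStrictOrderedRing K]
    [TopologicalSpace K] [IsTopologicalRing K] [T1Space K] {A : X → Matrix ι κ K} {x : X}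
    (hA : ∀ i j, ContinuousAt (fun y => A y i j) x) (hx : (A x).rank = Fintype.card ι) :
    ∀ᶠ y in nhds x, (A y).rank = Fintype.card ι := by
  have hdet : ContinuousAt (fun y => (A y * (A y)ᵀ).det) x := by
    simp only [Matrix.det_apply, Matrix.mul_apply, Matrix.transpose_apply]
    fun_prop
  filter_upwards [hdet.eventually_ne ((A x).rank_eq_card_iff_det_mul_transpose_ne_zero.1 hx)]
    with y hy using (A y).rank_eq_card_iff_det_mul_transpose_ne_zero.2 hy

section MatrixCalculus

variable {𝕜 : Type*} [NontriviallyNormedField 𝕜]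
  {E : Type*} [NormedAddCommGroup E] [NormedSpace 𝕜 E] {x : E}
  {k : Type*} [Fintype k] [DecidableEq k]

theorem Matrix.differentiableAt_det {M : E → Matrix k k 𝕜}
    (hM : ∀ i j, DifferentiableAt 𝕜 (fun y => M y i j) x) :
    DifferentiableAt 𝕜 (fun y => (M y).det) x := by
  simp only [Matrix.det_apply]
  fun_prop

theorem Matrix.differentiableAt_adjugate_apply {M : E → Matrix k k 𝕜}
    (hM : ∀ i j, DifferentiableAt 𝕜 (fun y => M y i j) x) (i j : k) :
    DifferentiableAt 𝕜 (fun y => (M y).adjugate i j) x := by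
  simp only [Matrix.adjugate_apply]
  refine Matrix.differentiableAt_det fun a b => ?_
  simp only [Matrix.updateRow_apply]
  split_ifs
  · exact differentiableAt_const _
  · exact hM a b

theorem Matrix.differentiableAt_inv_apply {M : E → Matrix k k 𝕜}
    (hM : ∀ i j, DifferentiableAt 𝕜 (fun y => M y i j) x) (hdet : (M x).det ≠ 0) (i j : k) :
    DifferentiableAt 𝕜 (fun y => (M y)⁻¹ i j) x := by
  simp only [Matrix.inv_def, Ring.inverse_eq_inv', Matrix.smul_apply, smul_eq_mul]
  exact ((Matrix.differentiableAt_det hM).inv hdet).mul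
    (Matrix.differentiableAt_adjugate_apply hM i j)

theorem Matrix.differentiableAt_mul_apply {a b c : Type*} [Fintype b]
    {P : E → Matrix a b 𝕜} {Q : E → Matrix b c 𝕜}
    (hP : ∀ i j, DifferentiableAt 𝕜 (fun y => P y i j) x)
    (hQ : ∀ i j, DifferentiableAt 𝕜 (fun y => Q y i j) x) (i : a) (j : c) :
    DifferentiableAt 𝕜 (fun y => (P y * Q y) i j) x := by
  simp only [Matrix.mul_apply]
  fun_prop

theorem fderiv_mulVec_of_eq_zero {a b : Type*} [Fintype a] [Fintype b]
    {C : E → Matrix a b 𝕜} {u : E → b → 𝕜}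
    (hC : ∀ i j, DifferentiableAt 𝕜 (fun y => C y i j) x) (hu : DifferentiableAt 𝕜 u x)
    (hux : u x = 0) (w : E) :
    fderiv 𝕜 (fun y => C y *ᵥ u y) x w = C x *ᵥ fderiv 𝕜 u x w := by
  have hu' : ∀ p, DifferentiableAt 𝕜 (fun y => u y p) x := differentiableAt_pi.1 hu
  have hCu : ∀ i, DifferentiableAt 𝕜 (fun y => (C y *ᵥ u y) i) x := fun i => by
    simp only [Matrix.mulVec, dotProduct]
    fun_prop
  ext i
  have hi := congrArg (· w) (fderiv_apply (differentiableAt_pi.2 hCu) i)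
  simp only [ContinuousLinearMap.comp_apply, ContinuousLinearMap.proj_apply] at hi
  rw [← hi]
  simp only [Matrix.mulVec, dotProduct]
  rw [fderiv_fun_sum (A := fun p y => C y i p * u y p) fun p _ => (hC i p).mul (hu' p),
    _root_.sum_apply]
  refine Finset.sum_congr rfl fun p _ => ?_
  rw [fderiv_fun_mul (hC i p) (hu' p), hux, fderiv_apply hu p]
  simp

theorem Matrix.of_fderiv_mulVec [CompleteSpace 𝕜] {ι κ : Type*} [Fintype ι] [Fintype κ]
    {Φ : E → ι → κ → 𝕜} (hΦ : DifferentiableAt 𝕜 Φ x) (v : E) (w : κ → 𝕜) :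
    Matrix.of (fderiv 𝕜 Φ x v) *ᵥ w = fderiv 𝕜 (fun y => Matrix.of (Φ y) *ᵥ w) x v := by
  let L : (ι → κ → 𝕜) →L[𝕜] ι → 𝕜 :=
    LinearMap.toContinuousLinearMap ((Matrix.mulVecBilin 𝕜 𝕜).flip w)
  exact (congrArg (· v) (L.hasFDerivAt.comp x hΦ.hasFDerivAt).fderiv).symm

end MatrixCalculus

theorem fderiv_fderiv_apply_const {𝕜 E F : Type*} [NontriviallyNormedField 𝕜]
    [NormedAddCommGroup E] [NormedSpace 𝕜 E] [NormedAddCommGroup F] [NormedSpace 𝕜 F]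
    {f : E → F} {x : E} (hf : DifferentiableAt 𝕜 (fderiv 𝕜 f) x) (v w : E) :
    fderiv 𝕜 (fun y => fderiv 𝕜 f y w) x v = fderiv 𝕜 (fderiv 𝕜 f) x v w := by
  rw [fderiv_clm_apply hf (differentiableAt_const w)]
  simp

theorem dotProduct_hess_mulVec {n : ℕ} {f : (Fin n → ℝ) → ℝ} {x : Fin n → ℝ}
    (hf : DifferentiableAt ℝ (fderiv ℝ f) x) (v w : Fin n → ℝ) :
    v ⬝ᵥ (hess f x *ᵥ w) = fderiv ℝ (fun y => fderiv ℝ f y w) x v := by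
  have hhess : hess f x = LinearMap.toMatrix₂' ℝ (fderiv ℝ (fderiv ℝ f) x).toLinearMap₁₂ := by
    ext i j
    simp [hess, LinearMap.toMatrix₂'_apply, fderiv_fderiv_apply_const hf]
  rw [hhess, ← Matrix.toLinearMap₂'_apply', Matrix.toLinearMap₂'_toMatrix',
    fderiv_fderiv_apply_const hf]
  rfl

section Jacobian

variable {n m : ℕ} {g : (Fin n → ℝ) → Fin m → ℝ} {x : Fin n → ℝ}

theorem jac_mulVec (y v : Fin n → ℝ) :
    jac g y *ᵥ v = fun i => fderiv ℝ (fun z => g z i) y v := by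
  ext i
  conv_rhs => rw [← Finset.univ_sum_single v]
  simp only [Matrix.mulVec, dotProduct, jac, Matrix.of_apply, map_sum]
  refine Finset.sum_congr rfl fun j _ => ?_
  rw [mul_comm, ← smul_eq_mul, ← map_smul, ← Pi.single_smul', smul_eq_mul, mul_one]

theorem differentiableAt_jac_mulVec
    (hg : ∀ i, DifferentiableAt ℝ (fderiv ℝ fun z => g z i) x) (w : Fin n → ℝ) :
    DifferentiableAt ℝ (fun y => jac g y *ᵥ w) x := by
  simp_rw [jac_mulVec]
  exact differentiableAt_pi.2 fun i => (hg i).clm_apply (differentiableAt_const w)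

theorem fderiv_jac_mulVec
    (hg : ∀ i, DifferentiableAt ℝ (fderiv ℝ fun z => g z i) x) (v w : Fin n → ℝ) :
    fderiv ℝ (fun y => jac g y *ᵥ w) x v = fun i => v ⬝ᵥ (hess (fun z => g z i) x *ᵥ w) := by
  simp_rw [jac_mulVec]
  rw [fderiv_pi fun i => (hg i).clm_apply (differentiableAt_const w)]
  ext i
  rw [dotProduct_hess_mulVec (hg i)]
  rfl

end Jacobian

theorem stmt_5_general {n m : ℕ}
    (g : (Fin n → ℝ) → Fin m → ℝ) (hg : ContDiff ℝ 2 g)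
    (x : Fin n → ℝ) (hrank : (jac g x).rank = m)
    (Pig : (Fin n → ℝ) → Fin n → Fin n → ℝ)
    (hPig : ∀ y : Fin n → ℝ, (jac g y).rank = m →
      Pig y = Matrix.of.symm
        ((1 : Matrix (Fin n) (Fin n) ℝ) -
          (jac g y)ᵀ * (jac g y * (jac g y)ᵀ)⁻¹ * jac g y))
    (v : Fin n → ℝ) (hv : jac g x *ᵥ v = 0) :
    Matrix.of (fderiv ℝ Pig x v) *ᵥ v =
      -((jac g x)ᵀ *ᵥ ((jac g x * (jac g x)ᵀ)⁻¹ *ᵥ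
          fun i => v ⬝ᵥ ((hess (fun y => g y i) x) *ᵥ v))) := by
  have hg' : ∀ i, DifferentiableAt ℝ (fderiv ℝ fun z => g z i) x := fun i =>
    (((contDiff_apply ℝ ℝ i).comp hg).fderiv_right le_rfl).differentiable one_ne_zero x
  set A := jac g
  set Q := fun y => (A y)ᵀ * (A y * (A y)ᵀ)⁻¹
  have hA : ∀ i j, DifferentiableAt ℝ (fun y => A y i j) x := fun i j =>
    (hg' i).clm_apply (differentiableAt_const _)
  have hS : ∀ i j, DifferentiableAt ℝ (fun y => (A y * (A y)ᵀ) i j) x :=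
    differentiableAt_mul_apply hA fun i j => hA j i
  have hdet : (A x * (A x)ᵀ).det ≠ 0 :=
    (jac g x).rank_eq_card_iff_det_mul_transpose_ne_zero.1 (by simpa using hrank)
  have hQ : ∀ i j, DifferentiableAt ℝ (fun y => Q y i j) x :=
    differentiableAt_mul_apply (fun i j => hA j i) (differentiableAt_inv_apply hS hdet)
  have hPig_eq : Pig =ᶠ[nhds x] fun y => Matrix.of.symm (1 - Q y * A y) := by
    filter_upwards [Matrix.eventually_rank_eq_card (fun i j => (hA i j).continuousAt)
      (by simpa using hrank)] with y hy
    exact hPig y (by simpa using hy)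
  have hPig_diff : DifferentiableAt ℝ Pig x := by
    refine DifferentiableAt.congr_of_eventuallyEq ?_ hPig_eq
    refine differentiableAt_pi.2 fun i => differentiableAt_pi.2 fun j => ?_
    exact (differentiableAt_const _).sub (differentiableAt_mul_apply hQ hA i j)
  have hPig_mulVec :
      (fun y => Matrix.of (Pig y) *ᵥ v) =ᶠ[nhds x] fun y => v - Q y *ᵥ (A y *ᵥ v) := by
    filter_upwards [hPig_eq] with y hy
    rw [hy, Equiv.apply_symm_apply, Matrix.sub_mulVec, Matrix.one_mulVec, Matrix.mulVec_mulVec]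
  rw [Matrix.of_fderiv_mulVec hPig_diff, hPig_mulVec.fderiv_eq, fderiv_const_sub,
    _root_.neg_apply,
    fderiv_mulVec_of_eq_zero hQ (differentiableAt_jac_mulVec hg' v) hv,
    fderiv_jac_mulVec hg', Matrix.mulVec_mulVec]

/-- the derivative of the field of orthogonal projections onto
Ker(Jg(y)) (second fundamental form of the constraint submanifold). -/
theorem stmt_5 {n m : ℕ} (hmn : m ≤ n)
    (g : (Fin n → ℝ) → Fin m → ℝ) (hg : ContDiff ℝ 2 g)
    (x : Fin n → ℝ) (hrank : (jac g x).rank = m)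
    (Pig : (Fin n → ℝ) → Fin n → Fin n → ℝ)
    (hPig : ∀ y : Fin n → ℝ, (jac g y).rank = m →
      Pig y = Matrix.of.symm
        ((1 : Matrix (Fin n) (Fin n) ℝ) -
          (jac g y)ᵀ * (jac g y * (jac g y)ᵀ)⁻¹ * jac g y))
    (v : Fin n → ℝ) (hv : jac g x *ᵥ v = 0) :
    Matrix.of (fderiv ℝ Pig x v) *ᵥ v =
      -((jac g x)ᵀ *ᵥ ((jac g x * (jac g x)ᵀ)⁻¹ *ᵥ
          fun i => v ⬝ᵥ ((hess (fun y => g y i) x) *ᵥ v))) :=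
  stmt_5_general g hg x hrank Pig hPig v hv
end

section
/- Let m ≤ n, let f : ℝⁿ → ℝ and g : ℝⁿ → ℝᵐ be C², let x* satisfy g(x*) = 0 with Jg(x*) of full rank m, let V be an n×(n−m) matrix whose columns span Ker(Jg(x*)), and let ψ = (ψ₁,…,ψₘ) : B(0, r̄) ⊆ ℝ^{n−m} → ℝᵐ be C² with ψ(0) = 0, Jψ(0) = 0 and g(x* + Va + Jg(x*)ᵀ ψ(a)) = 0 for all a ∈ B(0, r̄). Define F(a) = f(x* + Va + Jg(x*)ᵀ ψ(a)). Then the Hessian of F at 0 satisfies ∇²F(0) = Vᵀ ∇²f(x*) V + Σⱼ₌₁ᵐ (∇f(x*)ᵀ ∇gⱼ(x*)) ∇²ψⱼ(0), where ∇²ψⱼ(0) is the Hessian of ψⱼ at 0. -/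
open Matrix Set Metric

/-!
Write `F = f ∘ φ` with `φ a = x* + V a + Jg(x*)ᵀ ψ(a)`. The second-order chain rule gives
`D²F(0)(u, v) = D²f(x*)(Dφ(0) u, Dφ(0) v) + Df(x*)(D²φ(0)(u, v))`. Since `Jψ(0) = 0`,
`Dφ(0) = V` and `D²φ(0) = Jg(x*)ᵀ D²ψ(0)`, and `Df(x*)(Jg(x*)ᵀ w) = Σⱼ (∇f(x*)ᵀ∇gⱼ(x*)) wⱼ`.
Taking matrices of these bilinear forms in the standard basis gives the formula.
-/

open Filter Topology

section SecondOrderChainRule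

variable {𝕜 : Type*} [NontriviallyNormedField 𝕜]
  {E F G H : Type*} [NormedAddCommGroup E] [NormedSpace 𝕜 E] [NormedAddCommGroup F]
  [NormedSpace 𝕜 F] [NormedAddCommGroup G] [NormedSpace 𝕜 G] [NormedAddCommGroup H]
  [NormedSpace 𝕜 H]

theorem ContDiffAt.differentiableAt_fderiv {f : E → F} {x : E} (hf : ContDiffAt 𝕜 2 f x) :
    DifferentiableAt 𝕜 (fderiv 𝕜 f) x :=
  (hf.fderiv_right (m := 1) (by norm_num)).differentiableAt one_ne_zero

theorem ContDiffAt.eventually_differentiableAt {f : E → F} {x : E} (hf : ContDiffAt 𝕜 2 f x) :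
    ∀ᶠ y in 𝓝 x, DifferentiableAt 𝕜 f y :=
  (hf.eventually (by simp)).mono fun _ h ↦ h.differentiableAt two_ne_zero

theorem fderiv_fderiv_comp_apply {f : F → G} {φ : E → F} {x : E}
    (hf : ContDiffAt 𝕜 2 f (φ x)) (hφ : ContDiffAt 𝕜 2 φ x) (u v : E) :
    fderiv 𝕜 (fderiv 𝕜 (f ∘ φ)) x u v =
      fderiv 𝕜 (fderiv 𝕜 f) (φ x) (fderiv 𝕜 φ x u) (fderiv 𝕜 φ x v) +
        fderiv 𝕜 f (φ x) (fderiv 𝕜 (fderiv 𝕜 φ) x u v) := by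
  have hD : fderiv 𝕜 (f ∘ φ) =ᶠ[𝓝 x] fun a ↦ (fderiv 𝕜 f (φ a)).comp (fderiv 𝕜 φ a) := by
    filter_upwards [hφ.continuousAt.eventually hf.eventually_differentiableAt,
      hφ.eventually_differentiableAt] with a hfa hφa using fderiv_comp a hfa hφa
  have hD' : HasFDerivAt (fun a ↦ (fderiv 𝕜 f (φ a)).comp (fderiv 𝕜 φ a)) _ x :=
    (hf.differentiableAt_fderiv.hasFDerivAt.comp x
      (hφ.differentiableAt two_ne_zero).hasFDerivAt).clm_comp
      hφ.differentiableAt_fderiv.hasFDerivAt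
  rw [hD.fderiv_eq, hD'.fderiv]
  simp [add_comm]

theorem fderiv_fderiv_clm_comp_apply (L : F →L[𝕜] G) {φ : E → F} {x : E}
    (hφ : ContDiffAt 𝕜 2 φ x) (u v : E) :
    fderiv 𝕜 (fderiv 𝕜 (L ∘ φ)) x u v = L (fderiv 𝕜 (fderiv 𝕜 φ) x u v) := by
  have hL : fderiv 𝕜 L = fun _ ↦ L := funext fun _ ↦ L.fderiv
  simp [fderiv_fderiv_comp_apply L.contDiff.contDiffAt hφ, hL]

theorem fderiv_fderiv_const_add_clm_add {h : E → F} {x : E} (c : F) (A : E →L[𝕜] F)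
    (hh : ∀ᶠ a in 𝓝 x, DifferentiableAt 𝕜 h a) :
    fderiv 𝕜 (fderiv 𝕜 fun a ↦ c + A a + h a) x = fderiv 𝕜 (fderiv 𝕜 h) x := by
  have hD : (fderiv 𝕜 fun a ↦ c + A a + h a) =ᶠ[𝓝 x] fun a ↦ A + fderiv 𝕜 h a := by
    filter_upwards [hh] with a ha
    have : HasFDerivAt (fun a ↦ c + A a + h a) (0 + A + fderiv 𝕜 h a) a :=
      ((hasFDerivAt_const c a).add A.hasFDerivAt).add ha.hasFDerivAt
    rw [this.fderiv, zero_add]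
  rw [hD.fderiv_eq, fderiv_const_add]

theorem fderiv_fderiv_comp_const_add_clm_add_clm_comp_apply {f : F → G} {ψ : E → H} {x : E}
    (c : F) (A : E →L[𝕜] F) (B : H →L[𝕜] F) (hf : ContDiffAt 𝕜 2 f (c + A x + B (ψ x)))
    (hψ : ContDiffAt 𝕜 2 ψ x) (hψ' : fderiv 𝕜 ψ x = 0) (u v : E) :
    fderiv 𝕜 (fderiv 𝕜 fun a ↦ f (c + A a + B (ψ a))) x u v =
      fderiv 𝕜 (fderiv 𝕜 f) (c + A x + B (ψ x)) (A u) (A v) +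
        fderiv 𝕜 f (c + A x + B (ψ x)) (B (fderiv 𝕜 (fderiv 𝕜 ψ) x u v)) := by
  set φ : E → F := fun a ↦ c + A a + B (ψ a)
  have hφ : ContDiffAt 𝕜 2 φ x := by fun_prop
  have hDφ : fderiv 𝕜 φ x = A := by
    have : HasFDerivAt φ (0 + A + B.comp (fderiv 𝕜 ψ x)) x :=
      ((hasFDerivAt_const c x).add A.hasFDerivAt).add
        (B.hasFDerivAt.comp x (hψ.differentiableAt two_ne_zero).hasFDerivAt)
    simpa [hψ'] using this.fderiv
  have hD2φ : fderiv 𝕜 (fderiv 𝕜 φ) x u v = B (fderiv 𝕜 (fderiv 𝕜 ψ) x u v) := by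
    change fderiv 𝕜 (fderiv 𝕜 fun a ↦ c + A a + (B ∘ ψ) a) x u v = _
    rw [fderiv_fderiv_const_add_clm_add c A
      (hψ.eventually_differentiableAt.mono fun a ha ↦ B.differentiableAt.comp a ha)]
    exact fderiv_fderiv_clm_comp_apply B hψ u v
  have := fderiv_fderiv_comp_apply (φ := φ) hf hφ u v
  rwa [hDφ, hD2φ] at this

end SecondOrderChainRule

section Hessian

variable {n : ℕ}

theorem hess_eq_toMatrix₂' {f : (Fin n → ℝ) → ℝ} {x : Fin n → ℝ}
    (h : DifferentiableAt ℝ (fderiv ℝ f) x) :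
    hess f x = LinearMap.toMatrix₂' ℝ (fderiv ℝ (fderiv ℝ f) x).toLinearMap₁₂ := by
  ext i j
  have hj := h.hasFDerivAt.clm_apply (hasFDerivAt_const (Pi.single j 1 : Fin n → ℝ) x)
  simp [hess, hj.fderiv]

theorem fderiv_apply_eq_grad_dotProduct (f : (Fin n → ℝ) → ℝ) (x v : Fin n → ℝ) :
    fderiv ℝ f x v = grad f x ⬝ᵥ v := by
  conv_lhs => rw [pi_eq_sum_univ' v]
  simp [dotProduct, grad, mul_comm]

theorem fderiv_transpose_jac_mulVec {m : ℕ} (f : (Fin n → ℝ) → ℝ)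
    (g : (Fin n → ℝ) → Fin m → ℝ) (x : Fin n → ℝ) (w : Fin m → ℝ) :
    fderiv ℝ f x ((jac g x)ᵀ *ᵥ w) = ∑ k, (grad f x ⬝ᵥ grad (fun y ↦ g y k) x) * w k := by
  rw [fderiv_apply_eq_grad_dotProduct, Matrix.dotProduct_transpose_mulVec]
  simp only [dotProduct, mulVec]
  exact Finset.sum_congr rfl fun k _ ↦ by
    simp only [jac, grad, of_apply, mul_comm (fderiv ℝ f x _), mul_comm (w k)]

end Hessian

theorem stmt_17_general {n m : ℕ}
    (f : (Fin n → ℝ) → ℝ) (g : (Fin n → ℝ) → Fin m → ℝ)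
    (hf : ContDiff ℝ 2 f)
    (xs : Fin n → ℝ)
    (V : Matrix (Fin n) (Fin (n - m)) ℝ)
    (r : ℝ) (hr : 0 < r)
    (ψ : (Fin (n - m) → ℝ) → Fin m → ℝ)
    (hψ : ContDiffOn ℝ 2 ψ (ball 0 r))
    (hψ0 : ψ 0 = 0) (hJψ0 : fderiv ℝ ψ 0 = 0)
    (F : (Fin (n - m) → ℝ) → ℝ)
    (hF : F = fun a => f (xs + V *ᵥ a + (jac g xs)ᵀ *ᵥ ψ a)) :
    hess F 0 = Vᵀ * hess f xs * V +
      ∑ j, (grad f xs ⬝ᵥ grad (fun y => g y j) xs) • hess (fun a => ψ a j) 0 := by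
  set A := LinearMap.toContinuousLinearMap (Matrix.toLin' V)
  set B := LinearMap.toContinuousLinearMap (Matrix.toLin' (jac g xs)ᵀ)
  have hFAB : F = fun a ↦ f (xs + A a + B (ψ a)) := hF
  have hψ₂ : ContDiffAt ℝ 2 ψ 0 := hψ.contDiffAt (ball_mem_nhds 0 hr)
  have hD2F : (fderiv ℝ (fderiv ℝ F) 0).toLinearMap₁₂ =
      (fderiv ℝ (fderiv ℝ f) xs).toLinearMap₁₂.compl₁₂ (A : _ →ₗ[ℝ] _) (A : _ →ₗ[ℝ] _) +
        ∑ k, (grad f xs ⬝ᵥ grad (fun y => g y k) xs) •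
          (fderiv ℝ (fderiv ℝ fun a ↦ ψ a k) 0).toLinearMap₁₂ := by
    ext u v
    have hD2ψ (k : Fin m) : fderiv ℝ (fderiv ℝ fun a ↦ ψ a k) 0 (Pi.single u 1) (Pi.single v 1) =
        fderiv ℝ (fderiv ℝ ψ) 0 (Pi.single u 1) (Pi.single v 1) k :=
      fderiv_fderiv_clm_comp_apply (ContinuousLinearMap.proj (R := ℝ) (φ := fun _ ↦ ℝ) k) hψ₂ _ _
    have hD2 := fderiv_fderiv_comp_const_add_clm_add_clm_comp_apply xs A B
      (by simpa [hψ0] using hf.contDiffAt) hψ₂ hJψ0 (Pi.single u 1) (Pi.single v 1)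
    rw [← hFAB] at hD2
    have hB (w : Fin m → ℝ) : B w = (jac g xs)ᵀ *ᵥ w := rfl
    simp [hD2, hψ0, hD2ψ, hB, fderiv_transpose_jac_mulVec]
  have hF₂ : ContDiffAt ℝ 2 F 0 := by
    rw [hFAB]
    fun_prop
  rw [hess_eq_toMatrix₂' hF₂.differentiableAt_fderiv, hD2F, map_add, LinearMap.toMatrix₂'_compl₁₂,
    LinearMap.coe_toContinuousLinearMap, LinearMap.toMatrix'_toLin',
    ← hess_eq_toMatrix₂' hf.contDiffAt.differentiableAt_fderiv, map_sum]
  simp_rw [map_smul, ← hess_eq_toMatrix₂' (contDiffAt_pi.1 hψ₂ _).differentiableAt_fderiv]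

/-- the Hessian at 0 of the objective in the local parametrization:
∇²F(0) = Vᵀ∇²f(x*)V + Σⱼ (∇f(x*)ᵀ∇gⱼ(x*)) ∇²ψⱼ(0). -/
theorem stmt_17 {n m : ℕ} (hmn : m ≤ n)
    (f : (Fin n → ℝ) → ℝ) (g : (Fin n → ℝ) → Fin m → ℝ)
    (hf : ContDiff ℝ 2 f) (hg : ContDiff ℝ 2 g)
    (xs : Fin n → ℝ) (hgxs : g xs = 0) (hrank : (jac g xs).rank = m)
    (V : Matrix (Fin n) (Fin (n - m)) ℝ)
    (hV : ∀ v : Fin n → ℝ, jac g xs *ᵥ v = 0 ↔ ∃ a : Fin (n - m) → ℝ, v = V *ᵥ a)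
    (r : ℝ) (hr : 0 < r)
    (ψ : (Fin (n - m) → ℝ) → Fin m → ℝ)
    (hψ : ContDiffOn ℝ 2 ψ (ball 0 r))
    (hψ0 : ψ 0 = 0) (hJψ0 : fderiv ℝ ψ 0 = 0)
    (hψg : ∀ a ∈ ball (0 : Fin (n - m) → ℝ) r,
      g (xs + V *ᵥ a + (jac g xs)ᵀ *ᵥ ψ a) = 0)
    (F : (Fin (n - m) → ℝ) → ℝ)
    (hF : F = fun a => f (xs + V *ᵥ a + (jac g xs)ᵀ *ᵥ ψ a)) :
    hess F 0 = Vᵀ * hess f xs * V +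
      ∑ j, (grad f xs ⬝ᵥ grad (fun y => g y j) xs) • hess (fun a => ψ a j) 0 :=
  stmt_17_general f g hf xs V r hr ψ hψ hψ0 hJψ0 F hF
end
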